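/- arXiv:1107.5342 — 3 statements merged into one kernel-verified Lean document; each statement's English description precedes it below -/
import Mathlib

section
/- If G is a chordal graph and S is a minimal separator between two nonadjacent vertices a and b, then S is a clique. -/
/-!
Let `A` and `B` be the vertices reachable from `a`, respectively `b`, without meeting `S`; since
`S` separates, `A` and `B` are disjoint and no edge joins them. By minimality every vertex of `S`
has a neighbour in `A` and one in `B`. So if `x, y ∈ S` were nonadjacent, shortest `x`–`y` walks
with interior in `A` and in `B` would be chordless paths of length at least 2, and together they
form a chordless cycle of length at least 4, which a chordal graph does not have.
-/

/-- `S` separates `a` from `b` in `G`: neither endpoint is in `S` and every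
walk from `a` to `b` passes through a vertex of `S`. -/
def Separates {V : Type*} (G : SimpleGraph V) (a b : V) (S : Set V) : Prop :=
  a ∉ S ∧ b ∉ S ∧ ∀ p : G.Walk a b, ∃ s ∈ S, s ∈ p.support

namespace SimpleGraph.Walk

variable {V : Type*} {G : SimpleGraph V} {u v : V}

theorem one_lt_length_of_not_adj (p : G.Walk u v) (hne : u ≠ v) (hnadj : ¬ G.Adj u v) :
    1 < p.length := by
  by_contra! h
  interval_cases hp : p.length
  · exact hne (eq_of_length_eq_zero hp)
  · exact hnadj (adj_of_length_eq_one hp)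

theorem IsChord.exists_length_lt {p : G.Walk u v} {x y : V} (h : p.IsChord s(x, y)) :
    ∃ q : G.Walk u v, q.support ⊆ p.support ∧ q.length < p.length := by
  obtain ⟨hxy, he, hx, hy⟩ := isChord_sym2Mk.mp h
  obtain ⟨i, rfl, hi⟩ := mem_support_iff_exists_getVert.mp hx
  obtain ⟨j, rfl, hj⟩ := mem_support_iff_exists_getVert.mp hy
  clear h hx hy
  wlog hij : i ≤ j generalizing i j
  · exact this j hj i hi hxy.symm (by rwa [Sym2.eq_swap]) (by omega)
  obtain rfl | rfl | hij : j = i ∨ j = i + 1 ∨ i + 2 ≤ j := by omega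
  · exact absurd rfl hxy.ne
  · exact absurd ((mk_mem_edges_iff_exists p).mpr ⟨i, by omega, rfl⟩) he
  · refine ⟨(p.take i).append (cons hxy (p.drop j)), ?_, ?_⟩
    · simp only [support_append, support_cons, support_take, drop_support_eq_support_drop_min,
        List.tail_cons]
      exact List.append_subset.mpr ⟨List.take_subset _ _, List.drop_subset _ _⟩
    · simp only [length_append, length_cons, take_length, drop_length]
      omega

theorem exists_isPath_isChordless (p : G.Walk u v) {T : Set V} (hp : ∀ z ∈ p.support, z ∈ T) :
    ∃ q : G.Walk u v, q.IsPath ∧ q.IsChordless ∧ ∀ z ∈ q.support, z ∈ T := by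
  classical
  obtain ⟨q, hqT, hq⟩ := (measure (length (G := G) (u := u) (v := v))).wf.has_min
    {q | ∀ z ∈ q.support, z ∈ T} ⟨p, hp⟩
  have shortest (r : G.Walk u v) (hr : ∀ z ∈ r.support, z ∈ T) : q.length ≤ r.length :=
    not_lt.mp (hq r hr)
  refine ⟨q, ?_, ?_, hqT⟩
  · rw [← q.bypass_eq_self_of_length_le_length_bypass
      (shortest _ fun z hz ↦ hqT z (q.support_bypass_subset_support hz))]
    exact q.bypass_isPath
  · intro e he
    induction e using Sym2.ind
    obtain ⟨r, hrq, hlt⟩ := he.exists_length_lt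
    exact hlt.not_ge (shortest r fun z hz ↦ hqT z (hrq hz))

theorem exists_adj_walk_notMem_support (p : G.Walk u v) {z : V} (hz : z ∈ p.support)
    (hzu : z ≠ u) :
    ∃ w, G.Adj w z ∧ ∃ q : G.Walk u w, q.support ⊆ p.support ∧ z ∉ q.support := by
  induction p with
  | nil => exact absurd (by simpa using hz) hzu
  | @cons u w _ h p ih =>
    by_cases hzw : z = w
    · subst hzw
      exact ⟨u, h, nil, by simp, by simpa using hzu⟩
    · obtain ⟨w', hw', q, hqp, hzq⟩ := ih (by simpa [hzu] using hz) hzw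
      exact ⟨w', hw', cons h q, List.cons_subset_cons _ hqp, by simp [hzu, hzq]⟩

theorem IsPath.ne_start_of_mem_support_tail {p : G.Walk u v} (hp : p.IsPath) {z : V}
    (hz : z ∈ p.support.tail) : z ≠ u := by
  have hnodup := hp.support_nodup
  rw [← p.cons_tail_support] at hnodup
  exact fun hzu ↦ (List.nodup_cons.mp hnodup).1 (hzu ▸ hz)

section Gluing

variable {x y : V} {A B : Set V} {P Q : G.Walk x y}

theorem four_le_length_append_reverse (hxy : x ≠ y) (hnadj : ¬ G.Adj x y) :
    4 ≤ (P.append Q.reverse).length := by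
  have := P.one_lt_length_of_not_adj hxy hnadj
  have := Q.one_lt_length_of_not_adj hxy hnadj
  rw [length_append, length_reverse]
  omega

theorem isCycle_append_reverse (hP : P.IsPath) (hQ : Q.IsPath) (hxy : x ≠ y)
    (hnadj : ¬ G.Adj x y) (hPA : ∀ z ∈ P.support, z = x ∨ z = y ∨ z ∈ A)
    (hQB : ∀ z ∈ Q.support, z = x ∨ z = y ∨ z ∈ B) (hAB : Disjoint A B) :
    (P.append Q.reverse).IsCycle := by
  refine hP.isCycle_append hQ.reverse (fun z hzP hzQ ↦ ?_)
    (Or.inl (P.one_lt_length_of_not_adj hxy hnadj))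
  have hzx := hP.ne_start_of_mem_support_tail hzP
  have hzy := hQ.reverse.ne_start_of_mem_support_tail hzQ
  have hzA := hPA z (List.mem_of_mem_tail hzP)
  have hzB := hQB z (by simpa using List.mem_of_mem_tail hzQ)
  simp only [hzx, hzy, false_or] at hzA hzB
  exact hAB.notMem_of_mem_left hzA hzB

theorem isChordless_append_reverse (hP : P.IsChordless) (hQ : Q.IsChordless)
    (hPA : ∀ z ∈ P.support, z = x ∨ z = y ∨ z ∈ A)
    (hQB : ∀ z ∈ Q.support, z = x ∨ z = y ∨ z ∈ B)
    (hAB : ∀ u ∈ A, ∀ v ∈ B, ¬ G.Adj u v) : (P.append Q.reverse).IsChordless := by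
  have cross {u v : V} (hu : u ∈ P.support) (hv : v ∈ Q.support) (huv : G.Adj u v) :
      u ∈ Q.support ∨ v ∈ P.support := by
    rcases hPA u hu with rfl | rfl | huA
    · exact Or.inl Q.start_mem_support
    · exact Or.inl Q.end_mem_support
    rcases hQB v hv with rfl | rfl | hvB
    · exact Or.inr P.start_mem_support
    · exact Or.inr P.end_mem_support
    exact absurd huv (hAB u huA v hvB)
  rw [isChordless_iff_forall_mem_edges]
  intro u v hu hv huv
  simp only [mem_support_append_iff, support_reverse, List.mem_reverse] at hu hv
  simp only [edges_append, edges_reverse, List.mem_append, List.mem_reverse]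
  rcases hu with huP | huQ <;> rcases hv with hvP | hvQ
  · exact Or.inl (hP.mem_edges huP hvP huv)
  · rcases cross huP hvQ huv with huQ | hvP
    · exact Or.inr (hQ.mem_edges huQ hvQ huv)
    · exact Or.inl (hP.mem_edges huP hvP huv)
  · rcases cross hvP huQ huv.symm with hvQ | huP
    · exact Or.inr (hQ.mem_edges huQ hvQ huv)
    · exact Or.inl (hP.mem_edges huP hvP huv)
  · exact Or.inr (hQ.mem_edges huQ hvQ huv)

end Gluing

end SimpleGraph.Walk

namespace SimpleGraph

variable {V : Type*} {G : SimpleGraph V} {S : Set V} {a u v : V}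

def reachableAvoiding (G : SimpleGraph V) (S : Set V) (a : V) : Set V :=
  {v | ∃ p : G.Walk a v, ∀ z ∈ p.support, z ∉ S}

theorem notMem_of_mem_reachableAvoiding (hv : v ∈ G.reachableAvoiding S a) : v ∉ S :=
  let ⟨p, hp⟩ := hv
  hp v p.end_mem_support

theorem Walk.mem_reachableAvoiding_of_mem_support (p : G.Walk a v)
    (hp : ∀ z ∈ p.support, z ∉ S) {z : V} (hz : z ∈ p.support) :
    z ∈ G.reachableAvoiding S a := by
  classical
  exact ⟨p.takeUntil z hz, fun z' hz' ↦ hp z' (p.support_takeUntil_subset_support hz hz')⟩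

theorem exists_walk_of_mem_reachableAvoiding (hu : u ∈ G.reachableAvoiding S a)
    (hv : v ∈ G.reachableAvoiding S a) :
    ∃ p : G.Walk u v, ∀ z ∈ p.support, z ∈ G.reachableAvoiding S a := by
  obtain ⟨pu, hpu⟩ := hu
  obtain ⟨pv, hpv⟩ := hv
  refine ⟨pu.reverse.append pv, fun z hz ↦ ?_⟩
  rw [Walk.mem_support_append_iff, Walk.support_reverse, List.mem_reverse] at hz
  rcases hz with hz | hz
  · exact pu.mem_reachableAvoiding_of_mem_support hpu hz
  · exact pv.mem_reachableAvoiding_of_mem_support hpv hz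

end SimpleGraph

open SimpleGraph

namespace Separates

variable {V : Type*} {G : SimpleGraph V} {a b u v x y z : V} {S : Set V}

theorem symm (h : Separates G a b S) : Separates G b a S := by
  refine ⟨h.2.1, h.1, fun p ↦ ?_⟩
  obtain ⟨s, hs, hsp⟩ := h.2.2 p.reverse
  exact ⟨s, hs, by simpa using hsp⟩

theorem exists_mem_support_of_mem_reachableAvoiding (h : Separates G a b S)
    (hu : u ∈ G.reachableAvoiding S a) (hv : v ∈ G.reachableAvoiding S b) (p : G.Walk u v) :
    ∃ s ∈ S, s ∈ p.support := by
  obtain ⟨pu, hpu⟩ := hu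
  obtain ⟨pv, hpv⟩ := hv
  obtain ⟨s, hs, hsp⟩ := h.2.2 (pu.append (p.append pv.reverse))
  simp only [Walk.mem_support_append_iff, Walk.support_reverse, List.mem_reverse] at hsp
  rcases hsp with hsp | hsp | hsp
  · exact absurd hs (hpu s hsp)
  · exact ⟨s, hs, hsp⟩
  · exact absurd hs (hpv s hsp)

theorem disjoint_reachableAvoiding (h : Separates G a b S) :
    Disjoint (G.reachableAvoiding S a) (G.reachableAvoiding S b) := by
  refine Set.disjoint_left.mpr fun u hua hub ↦ ?_
  obtain ⟨s, hs, hsu⟩ := h.exists_mem_support_of_mem_reachableAvoiding hua hub Walk.nil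
  rw [Walk.support_nil, List.mem_singleton] at hsu
  exact notMem_of_mem_reachableAvoiding hua (hsu ▸ hs)

theorem not_adj_of_mem_reachableAvoiding (h : Separates G a b S)
    (hu : u ∈ G.reachableAvoiding S a) (hv : v ∈ G.reachableAvoiding S b) : ¬ G.Adj u v := by
  intro huv
  obtain ⟨s, hs, hsuv⟩ := h.exists_mem_support_of_mem_reachableAvoiding hu hv huv.toWalk
  rw [Adj.support_toWalk, List.mem_pair] at hsuv
  rcases hsuv with rfl | rfl
  · exact notMem_of_mem_reachableAvoiding hu hs
  · exact notMem_of_mem_reachableAvoiding hv hs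

theorem exists_adj_mem_reachableAvoiding (h : Separates G a b S)
    (hmin : ∀ T : Set V, T ⊂ S → ¬ Separates G a b T) (hz : z ∈ S) :
    ∃ u ∈ G.reachableAvoiding S a, G.Adj u z := by
  obtain ⟨p, hp⟩ : ∃ p : G.Walk a b, ∀ s ∈ S \ {z}, s ∉ p.support := by
    by_contra! hcon
    exact hmin _ (Set.sdiff_singleton_ssubset.mpr hz)
      ⟨fun ha ↦ h.1 ha.1, fun hb ↦ h.2.1 hb.1, hcon⟩
  have hzp : z ∈ p.support := by
    obtain ⟨s, hs, hsp⟩ := h.2.2 p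
    by_cases hsz : s = z
    · exact hsz ▸ hsp
    · exact absurd hsp (hp s ⟨hs, hsz⟩)
  obtain ⟨u, huz, q, hqp, hzq⟩ :=
    p.exists_adj_walk_notMem_support hzp (ne_of_mem_of_not_mem hz h.1)
  refine ⟨u, ⟨q, fun s hsq hs ↦ ?_⟩, huz⟩
  exact hp s ⟨hs, fun hsz ↦ hzq (hsz ▸ hsq)⟩ (hqp hsq)

theorem exists_isPath_isChordless (h : Separates G a b S)
    (hmin : ∀ T : Set V, T ⊂ S → ¬ Separates G a b T) (hx : x ∈ S) (hy : y ∈ S) :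
    ∃ P : G.Walk x y, P.IsPath ∧ P.IsChordless ∧
      ∀ z ∈ P.support, z = x ∨ z = y ∨ z ∈ G.reachableAvoiding S a := by
  obtain ⟨ux, hux, hxu⟩ := h.exists_adj_mem_reachableAvoiding hmin hx
  obtain ⟨uy, huy, hyu⟩ := h.exists_adj_mem_reachableAvoiding hmin hy
  obtain ⟨p, hp⟩ := exists_walk_of_mem_reachableAvoiding hux huy
  refine (Walk.cons hxu.symm (p.concat hyu)).exists_isPath_isChordless fun z hz ↦ ?_
  simp only [Walk.support_cons, Walk.support_concat, List.mem_cons, List.mem_append,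
    List.not_mem_nil, or_false] at hz
  rcases hz with hz | hz | hz
  · exact Or.inl hz
  · exact Or.inr (Or.inr (hp z hz))
  · exact Or.inr (Or.inl hz)

end Separates

theorem chordal_minimal_separator_clique_general {V : Type*}
    (G : SimpleGraph V)
    (hchordal : ∀ (u : V) (c : G.Walk u u), c.IsCycle → 4 ≤ c.length →
      ∃ x y : V, x ∈ c.support ∧ y ∈ c.support ∧ G.Adj x y ∧ s(x, y) ∉ c.edges)
    (a b : V) (S : Set V)
    (hsep : Separates G a b S)
    (hmin : ∀ T : Set V, T ⊂ S → ¬ Separates G a b T) :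
    ∀ x ∈ S, ∀ y ∈ S, x ≠ y → G.Adj x y := by
  intro x hx y hy hxy
  by_contra hnadj
  obtain ⟨P, hP, hPc, hPA⟩ := hsep.exists_isPath_isChordless hmin hx hy
  obtain ⟨Q, hQ, hQc, hQB⟩ :=
    hsep.symm.exists_isPath_isChordless (fun T hT hTsep ↦ hmin T hT hTsep.symm) hx hy
  obtain ⟨u, v, hu, hv, huv, hne⟩ := hchordal x (P.append Q.reverse)
    (Walk.isCycle_append_reverse hP hQ hxy hnadj hPA hQB hsep.disjoint_reachableAvoiding)
    (Walk.four_le_length_append_reverse hxy hnadj)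
  exact hne ((Walk.isChordless_append_reverse hPc hQc hPA hQB
    fun _ hu _ hv ↦ hsep.not_adj_of_mem_reachableAvoiding hu hv).mem_edges hu hv huv)

/-- In a chordal graph, every minimal separator between two nonadjacent
vertices is a clique. -/
theorem chordal_minimal_separator_clique {V : Type*} [Fintype V]
    (G : SimpleGraph V)
    (hchordal : ∀ (u : V) (c : G.Walk u u), c.IsCycle → 4 ≤ c.length →
      ∃ x y : V, x ∈ c.support ∧ y ∈ c.support ∧ G.Adj x y ∧ s(x, y) ∉ c.edges)
    (a b : V) (hab : a ≠ b) (hnadj : ¬ G.Adj a b) (S : Set V)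
    (hsep : Separates G a b S)
    (hmin : ∀ T : Set V, T ⊂ S → ¬ Separates G a b T) :
    ∀ x ∈ S, ∀ y ∈ S, x ≠ y → G.Adj x y :=
  chordal_minimal_separator_clique_general G hchordal a b S hsep hmin
end

section
/- If a graph G satisfies the property that every minimal separator between any two nonadjacent vertices is a clique, then every induced subgraph of G also satisfies this property. -/
/-- The property that every minimal separator between two nonadjacent vertices
is a clique. -/
def MinSepCliqueProp {V : Type*} (G : SimpleGraph V) : Prop :=
  ∀ a b : V, a ≠ b → ¬ G.Adj a b → ∀ S : Set V, Separates G a b S →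
    (∀ T : Set V, T ⊂ S → ¬ Separates G a b T) →
    ∀ x ∈ S, ∀ y ∈ S, x ≠ y → G.Adj x y

/-
If `S` is a minimal separator of `a, b` in `G[W]`, then `S ∪ (V \ W)` separates them in `G`;
since `V` is finite, it contains a minimal separator `T` of `G`. Pulling `T` back to `W` gives
a separator of `G[W]` inside `S`, hence equal to `S` by minimality; so `S ⊆ T`, and `T` is a
clique of `G`.
-/

namespace Separates

variable {V : Type*} {G : SimpleGraph V}

theorem comap {U : Type*} {H : SimpleGraph U} (f : H →g G) {a b : U} {T : Set V}
    (hT : Separates G (f a) (f b) T) : Separates H a b (f ⁻¹' T) := by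
  obtain ⟨haT, hbT, hwalk⟩ := hT
  refine ⟨haT, hbT, fun p => ?_⟩
  obtain ⟨t, htT, htp⟩ := hwalk (p.map f)
  obtain ⟨u, hu, rfl⟩ := List.mem_map.mp (SimpleGraph.Walk.support_map f p ▸ htp)
  exact ⟨u, htT, hu⟩

theorem image_union_compl_of_induce {W : Set V} {a b : W} {S : Set W}
    (hS : Separates (G.induce W) a b S) : Separates G a b (Subtype.val '' S ∪ Wᶜ) := by
  obtain ⟨haS, hbS, hwalk⟩ := hS
  have not_mem : ∀ c : W, c ∉ S → (c : V) ∉ Subtype.val '' S ∪ Wᶜ := by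
    rintro c hc (⟨s, hs, hsc⟩ | hcW)
    · exact hc (Subtype.val_injective hsc ▸ hs)
    · exact hcW c.2
  refine ⟨not_mem a haS, not_mem b hbS, fun p => ?_⟩
  by_cases hpW : ∀ x ∈ p.support, x ∈ W
  · obtain ⟨s, hs, hsp⟩ := hwalk (p.induce W hpW)
    rw [SimpleGraph.Walk.support_induce, List.mem_attachWith] at hsp
    exact ⟨s, Or.inl ⟨s, hs, rfl⟩, hsp⟩
  · push Not at hpW
    obtain ⟨x, hxp, hxW⟩ := hpW
    exact ⟨x, Or.inr hxW, hxp⟩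

end Separates

theorem image_subset_of_minimal_separates_induce {V : Type*} {G : SimpleGraph V} {W : Set V}
    {a b : W} {S : Set W} (hS : Minimal (Separates (G.induce W) a b) S) {T : Set V}
    (hT : Separates G a b T) (hTS : T ⊆ Subtype.val '' S ∪ Wᶜ) : Subtype.val '' S ⊆ T := by
  have hpre : Subtype.val ⁻¹' T ⊆ S := by
    intro x hx
    rcases hTS hx with ⟨s, hs, hsx⟩ | hxW
    · exact Subtype.val_injective hsx ▸ hs
    · exact absurd x.2 hxW
  have hsep := hT.comap (SimpleGraph.Embedding.induce W).toHom
  exact Set.image_subset_iff.mpr (hS.eq_of_subset hsep hpre).symm.subset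

/-- The minimal-separators-are-cliques property is hereditary: it passes to
every induced subgraph. -/
theorem minSepCliqueProp_hereditary {V : Type*} [Fintype V] (G : SimpleGraph V)
    (h : MinSepCliqueProp G) (W : Set V) :
    MinSepCliqueProp (G.induce W) := by
  intro a b hab hnadj S hS hSmin x hx y hy hxy
  have hSminimal : Minimal (Separates (G.induce W) a b) S :=
    Set.minimal_iff_forall_ssubset.mpr ⟨hS, fun T hT => hSmin T hT⟩
  obtain ⟨T, hTS, hTmin⟩ :=
    exists_minimal_le_of_wellFoundedLT _ _ hS.image_union_compl_of_induce
  have hST := image_subset_of_minimal_separates_induce hSminimal hTmin.prop hTS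
  exact SimpleGraph.induce_adj.mpr <|
    h a b (Subtype.val_injective.ne hab) (mt SimpleGraph.induce_adj.mpr hnadj) T hTmin.prop
      (fun T' hT' => hTmin.not_prop_of_ssubset hT') x (hST ⟨x, hx, rfl⟩) y (hST ⟨y, hy, rfl⟩)
      (Subtype.val_injective.ne hxy)
end

section
/- For real numbers δ₁,...,δₙ with |δᵢ| ≤ u for all i, where 0 ≤ u < 1 and nu ≤ α < 1, the product ∏ᵢ(1 + δᵢ) satisfies 1 − nu ≤ ∏ᵢ(1 + δᵢ) ≤ 1 + (1 + α)·n·u. -/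
/-!
Each factor lies in `[1 - u, 1 + u]`, so the product lies in `[(1 - u)ⁿ, (1 + u)ⁿ]`.
Bernoulli's inequality gives `1 - n u ≤ (1 - u)ⁿ`. For the upper end, `(1 + u)ⁿ ≤ exp (n u)`,
and `exp x ≤ 1 + x + x²` for `|x| ≤ 1`; with `x = n u ≤ α` the quadratic term is at most `α n u`.
-/

open Finset Real

section ProductBounds

variable {ι R : Type*} [CommRing R] [LinearOrder R] [IsStrictOrderedRing R]
  {s : Finset ι} {δ : ι → R} {u : R}

theorem one_sub_pow_card_le_prod_one_add (hu : u ≤ 1) (hδ : ∀ i ∈ s, |δ i| ≤ u) :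
    (1 - u) ^ #s ≤ ∏ i ∈ s, (1 + δ i) := by
  rw [← prod_const]
  refine prod_le_prod (fun _ _ => sub_nonneg.mpr hu) fun i hi => ?_
  linarith [neg_abs_le (δ i), hδ i hi]

theorem prod_one_add_le_one_add_pow_card (hδ : ∀ i ∈ s, |δ i| ≤ u) :
    ∏ i ∈ s, (1 + δ i) ≤ (1 + u) ^ #s :=
  calc ∏ i ∈ s, (1 + δ i) ≤ ∏ i ∈ s, |1 + δ i| := (le_abs_self _).trans (abs_prod s _).le
    _ ≤ ∏ _i ∈ s, (1 + u) := prod_le_prod (fun _ _ => abs_nonneg _) fun i hi =>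
        (abs_add_le _ _).trans (by rw [abs_one]; linarith [hδ i hi])
    _ = (1 + u) ^ #s := prod_const _

end ProductBounds

theorem one_sub_mul_le_one_sub_pow {u : ℝ} (hu : u ≤ 2) (n : ℕ) : 1 - n * u ≤ (1 - u) ^ n := by
  simpa [sub_eq_add_neg] using one_add_mul_le_pow (a := -u) (by linarith) n

theorem one_add_pow_le_one_add_mul_add_sq {u : ℝ} {n : ℕ} (hu : 0 ≤ u) (hnu : n * u ≤ 1) :
    (1 + u) ^ n ≤ 1 + n * u + (n * u) ^ 2 := by
  have hexp : (1 + u) ^ n ≤ exp (n * u) := by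
    rw [exp_nat_mul]
    exact pow_le_pow_left₀ (by linarith) (by linarith [add_one_le_exp u]) n
  have hquad := abs_le.mp (abs_exp_sub_one_sub_id_le (abs_le.mpr ⟨by nlinarith, hnu⟩))
  linarith [hquad.2]

theorem product_error_bound_general (n : ℕ) (u α : ℝ)
    (hu0 : 0 ≤ u) (hu1 : u < 1) (hα : (n : ℝ) * u ≤ α) (hα1 : α < 1)
    (δ : Fin n → ℝ) (hδ : ∀ i, |δ i| ≤ u) :
    1 - (n : ℝ) * u ≤ ∏ i, (1 + δ i) ∧
      ∏ i, (1 + δ i) ≤ 1 + (1 + α) * (n : ℝ) * u := by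
  have hδ' : ∀ i ∈ univ, |δ i| ≤ u := fun i _ => hδ i
  have hsq : ((n : ℝ) * u) ^ 2 ≤ α * (n * u) :=
    (sq _).trans_le (mul_le_mul_of_nonneg_right hα (by positivity))
  constructor
  · calc 1 - (n : ℝ) * u ≤ (1 - u) ^ n := one_sub_mul_le_one_sub_pow (by linarith) n
      _ ≤ ∏ i, (1 + δ i) := by simpa using one_sub_pow_card_le_prod_one_add hu1.le hδ'
  · calc ∏ i, (1 + δ i) ≤ (1 + u) ^ n := by simpa using prod_one_add_le_one_add_pow_card hδ'
      _ ≤ 1 + n * u + (n * u) ^ 2 := one_add_pow_le_one_add_mul_add_sq hu0 (by linarith)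
      _ ≤ 1 + (1 + α) * n * u := by linarith

/-- Rounding-error product bound: if `|δᵢ| ≤ u` with `0 ≤ u < 1` and
`n·u ≤ α < 1`, then `1 − n·u ≤ ∏ᵢ (1 + δᵢ) ≤ 1 + (1 + α)·n·u`. -/
theorem product_error_bound (n : ℕ) (hn : 0 < n) (u α : ℝ)
    (hu0 : 0 ≤ u) (hu1 : u < 1) (hα : (n : ℝ) * u ≤ α) (hα1 : α < 1)
    (δ : Fin n → ℝ) (hδ : ∀ i, |δ i| ≤ u) :
    1 - (n : ℝ) * u ≤ ∏ i, (1 + δ i) ∧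
      ∏ i, (1 + δ i) ≤ 1 + (1 + α) * (n : ℝ) * u :=
  product_error_bound_general n u α hu0 hu1 hα hα1 δ hδ
end
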